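/- arXiv:1402.5040 — 2 statements merged into one kernel-verified Lean document; each statement's English description precedes it below -/
import Mathlib

section
/- For every integer n ≥ 1, every ρ > 0, and every k with 0 ≤ k ≤ n, the polynomial l_{n,k}^ρ — defined as the unique polynomial in Π_n satisfying F_{n,j}^ρ(l_{n,k}^ρ) = δ_{jk} for j = 0,…,n (Kronecker delta) — has n distinct roots in the interval [0,1]. -/
open MeasureTheory

/-- Euler Beta function `B(a,b) = ∫₀¹ t^(a-1) (1-t)^(b-1) dt`. -/
noncomputable def betaFn (a b : ℝ) : ℝ :=
  ∫ t in (0:ℝ)..1, t ^ (a - 1) * (1 - t) ^ (b - 1)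

/-- The functionals `F_{n,k}^ρ`. -/
noncomputable def Ffun (n k : ℕ) (ρ : ℝ) (f : ℝ → ℝ) : ℝ :=
  if k = 0 then f 0
  else if k = n then f 1
  else (betaFn ((k : ℝ) * ρ) (((n : ℝ) - (k : ℝ)) * ρ))⁻¹ *
    ∫ t in (0:ℝ)..1, t ^ ((k : ℝ) * ρ - 1) * (1 - t) ^ (((n : ℝ) - (k : ℝ)) * ρ - 1) * f t

/-- Bernstein basis polynomial `p_{n,k}(x)`. -/
noncomputable def bern (n k : ℕ) (x : ℝ) : ℝ :=
  (n.choose k : ℝ) * x ^ k * (1 - x) ^ (n - k)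

/-- The operator `U_n^ρ`. -/
noncomputable def Uop (n : ℕ) (ρ : ℝ) (f : ℝ → ℝ) (x : ℝ) : ℝ :=
  ∑ k ∈ Finset.range (n + 1), Ffun n k ρ f * bern n k x

/-!
For `0 < j < n`, `j ≠ k`, the condition `F_{n,j}^ρ(l) = 0` says that `l` is orthogonal on `(0,1)`
to `t^{jρ-1}(1-t)^{(n-j)ρ-1} = w(t) v(t)^j`, where `w > 0` and `v(t) = (t/(1-t))^ρ` is increasing.
Let `D` be the set of points of `(0,1)` where `l` changes sign (its roots of odd multiplicity).
If `D` had fewer elements than there are such `j`, linear algebra would give a polynomial `Q ≠ 0`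
built from at most `#D + 1` of the monomials `X^j` and vanishing on `v(D)`; by Descartes' rule of
signs these are all its positive roots, and they are simple. Then `w · (Q ∘ v) · l` is a
combination of the orthogonality weights times `l`, yet it has constant sign on `(0,1)` and only
finitely many zeros, so its integral cannot vanish. The conditions at `j = 0` and `j = n` add the
roots `0` and `1` whenever `k ≠ 0`, resp. `k ≠ n`.
-/

open Set Polynomial Filter intervalIntegral
open scoped Interval

theorem Polynomial.signVariations_lt_card_support {R : Type*} [Semiring R] [LinearOrder R]
    {P : R[X]} (hP : P ≠ 0) : P.signVariations < P.support.card := by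
  induction hc : P.support.card generalizing P with
  | zero => simp_all
  | succ m ih =>
    by_cases he : P.eraseLead = 0
    · rw [← eraseLead_add_monomial_natDegree_leadingCoeff P, he, zero_add,
        signVariations_monomial]
      omega
    · have := ih he (card_support_eraseLead' hc)
      have := signVariations_le_eraseLead_succ P
      omega

theorem Polynomial.roots_countP_pos_lt_card_support {R : Type*} [CommRing R] [LinearOrder R]
    [IsStrictOrderedRing R] {P : R[X]} (hP : P ≠ 0) :
    P.roots.countP (0 < ·) < P.support.card :=
  (roots_countP_pos_le_signVariations P).trans_lt (signVariations_lt_card_support hP)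

theorem Polynomial.exists_ne_zero_support_subset_eval_eq_zero {K : Type*} [Field K]
    {S : Finset ℕ} {T : Finset K} (h : T.card < S.card) :
    ∃ Q : K[X], Q ≠ 0 ∧ Q.support ⊆ S ∧ ∀ x ∈ T, Q.eval x = 0 := by
  let L := Matrix.mulVecLin (Matrix.of fun (x : T) (e : S) => (x : K) ^ (e : ℕ))
  have hker : LinearMap.ker L ≠ ⊥ :=
    LinearMap.ker_ne_bot_of_finrank_lt (by simpa [Module.finrank_fintype_fun_eq_card] using h)
  obtain ⟨c, hc, hc0⟩ := (Submodule.ne_bot_iff _).1 hker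
  have hcoeff : ∀ e : S, (∑ f : S, monomial (f : ℕ) (c f)).coeff e = c e := by
    intro e
    rw [finsetSum_coeff, Finset.sum_eq_single e]
    · simp
    · intro f _ hfe
      rw [coeff_monomial, if_neg (fun h => hfe (Subtype.ext h))]
    · simp
  refine ⟨∑ f : S, monomial (f : ℕ) (c f), ?_, ?_, ?_⟩
  · obtain ⟨e, he⟩ := Function.ne_iff.1 hc0
    intro hQ
    exact he (by rw [← hcoeff e, hQ, coeff_zero, Pi.zero_apply])
  · intro d hd
    by_contra hdS
    refine mem_support_iff.1 hd ?_
    rw [finsetSum_coeff]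
    refine Finset.sum_eq_zero fun f _ => ?_
    rw [coeff_monomial, if_neg]
    rintro rfl
    exact hdS f.2
  · intro x hx
    have := congrFun (LinearMap.mem_ker.1 hc) ⟨x, hx⟩
    simpa [L, Matrix.mulVec, dotProduct, eval_finsetSum, mul_comm] using this

theorem Polynomial.exists_support_subset_odd_rootMultiplicity_iff {S : Finset ℕ}
    {P : Finset ℝ} (hP : ↑P ⊆ Ioi (0 : ℝ)) (hS : S.card = P.card + 1) :
    ∃ Q : ℝ[X], Q ≠ 0 ∧ Q.support ⊆ S ∧ ∀ y ∈ Ioi 0, Odd (Q.rootMultiplicity y) ↔ y ∈ P := by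
  obtain ⟨Q, hQ, hsupp, hroot⟩ := exists_ne_zero_support_subset_eval_eq_zero (S := S) (T := P)
    (by omega)
  have hle : P.val ≤ Q.roots.filter (0 < ·) := (Multiset.le_iff_subset P.nodup).2 fun y hy =>
    Multiset.mem_filter.2 ⟨(mem_roots hQ).2 (hroot y hy), hP hy⟩
  have hpos : Q.roots.filter (0 < ·) = P.val := by
    refine (Multiset.eq_of_le_of_card_le hle ?_).symm
    have := roots_countP_pos_lt_card_support hQ
    have := Finset.card_le_card hsupp
    rw [← Multiset.countP_eq_card_filter]
    change _ ≤ P.card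
    omega
  refine ⟨Q, hQ, hsupp, fun y (hy : 0 < y) => ?_⟩
  rw [← count_roots, ← Multiset.count_filter_of_pos hy, hpos, Multiset.count_eq_of_nodup P.nodup]
  by_cases hyP : y ∈ P <;> simp [hyP]

theorem Polynomial.eval_mul_eval_nonneg_of_even_rootMultiplicity {I : Set ℝ}
    (hI : I.OrdConnected) {p : ℝ[X]} (hp : ∀ x ∈ I, Even (p.rootMultiplicity x))
    {s t : ℝ} (hs : s ∈ I) (ht : t ∈ I) : 0 ≤ p.eval s * p.eval t := by
  induction hd : p.natDegree using Nat.strong_induction_on generalizing p with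
  | _ d ih =>
  by_cases hroot : ∃ a ∈ I, p ≠ 0 ∧ p.IsRoot a
  · obtain ⟨a, ha, hp0, hpa⟩ := hroot
    have h2 : 2 ≤ p.rootMultiplicity a := by
      obtain ⟨m, hm⟩ := hp a ha
      have := (rootMultiplicity_pos hp0).2 hpa
      omega
    obtain ⟨q, rfl⟩ := (le_rootMultiplicity_iff hp0).1 h2
    have hq0 : q ≠ 0 := right_ne_zero_of_mul hp0
    have hq : ∀ x ∈ I, Even (q.rootMultiplicity x) := by
      intro x hx
      have := hp x hx
      rw [rootMultiplicity_mul hp0, ← count_roots, roots_pow, roots_X_sub_C] at this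
      simpa [Multiset.count_nsmul, Nat.even_add] using this
    have hdeg : q.natDegree < d := by
      rw [← hd, natDegree_mul (pow_ne_zero 2 (X_sub_C_ne_zero a)) hq0, natDegree_pow,
        natDegree_X_sub_C]
      omega
    simp only [eval_mul, eval_pow, eval_sub, eval_X, eval_C]
    calc (0 : ℝ) ≤ ((s - a) * (t - a)) ^ 2 * (q.eval s * q.eval t) :=
          mul_nonneg (sq_nonneg _) (ih _ hdeg hq rfl)
      _ = _ := by ring
  · push Not at hroot
    by_contra! hneg
    have hp0 : p ≠ 0 := by rintro rfl; simp at hneg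
    obtain ⟨c, hc, hpc⟩ : ∃ c ∈ uIcc s t, p.eval c = 0 := by
      refine intermediate_value_uIcc p.continuousOn ?_
      rcases mul_neg_iff.1 hneg with ⟨h1, h2⟩ | ⟨h1, h2⟩
      · exact mem_uIcc.2 (Or.inr ⟨h2.le, h1.le⟩)
      · exact mem_uIcc.2 (Or.inl ⟨h1.le, h2.le⟩)
    exact hroot c (hI.uIcc_subset hs ht hc) hp0 hpc

theorem Polynomial.eval_mul_prod_sub_nonneg {I : Set ℝ} (hI : I.OrdConnected) {p : ℝ[X]}
    {D : Finset ℝ} (hD : ∀ x ∈ I, Odd (p.rootMultiplicity x) ↔ x ∈ D)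
    {s t : ℝ} (hs : s ∈ I) (ht : t ∈ I) :
    0 ≤ (p.eval s * ∏ d ∈ D, (s - d)) * (p.eval t * ∏ d ∈ D, (t - d)) := by
  rcases eq_or_ne p 0 with rfl | hp0
  · simp
  have hprod : (∏ d ∈ D, (X - C d)) ≠ 0 := Finset.prod_ne_zero_iff.2 fun d _ => X_sub_C_ne_zero d
  have heven : ∀ x ∈ I, Even ((p * ∏ d ∈ D, (X - C d)).rootMultiplicity x) := by
    intro x hx
    rw [rootMultiplicity_mul (mul_ne_zero hp0 hprod), ← count_roots (∏ d ∈ D, (X - C d)),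
      roots_prod_X_sub_C, Multiset.count_eq_of_nodup D.nodup]
    by_cases hxD : x ∈ D
    · simpa [hxD] using ((hD x hx).2 hxD).add_one
    · simpa [hxD] using Nat.not_odd_iff_even.1 (mt (hD x hx).1 hxD)
  simpa [eval_prod] using eval_mul_eval_nonneg_of_even_rootMultiplicity hI heven hs ht

theorem prod_sub_mul_prod_image_sub_pos {I : Set ℝ} {v : ℝ → ℝ} (hv : StrictMonoOn v I)
    {D : Finset ℝ} (hD : ↑D ⊆ I) {t : ℝ} (ht : t ∈ I) (htD : t ∉ D) :
    0 < (∏ d ∈ D, (t - d)) * ∏ y ∈ D.image v, (v t - y) := by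
  rw [Finset.prod_image (hv.injOn.mono hD), ← Finset.prod_mul_distrib]
  refine Finset.prod_pos fun d hd => ?_
  rcases lt_or_gt_of_ne (ne_of_mem_of_not_mem hd htD).symm with h | h
  · exact mul_pos_of_neg_of_neg (sub_neg.2 h) (sub_neg.2 (hv ht (hD hd) h))
  · exact mul_pos (sub_pos.2 h) (sub_pos.2 (hv (hD hd) ht h))

theorem Polynomial.eval_comp_mul_eval_mul_nonneg {I J : Set ℝ} (hI : I.OrdConnected)
    (hJ : J.OrdConnected) {v : ℝ → ℝ} (hv : StrictMonoOn v I) (hvIJ : MapsTo v I J)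
    {p q : ℝ[X]} {D : Finset ℝ} (hDI : ↑D ⊆ I)
    (hp : ∀ x ∈ I, Odd (p.rootMultiplicity x) ↔ x ∈ D)
    (hq : ∀ y ∈ J, Odd (q.rootMultiplicity y) ↔ y ∈ D.image v)
    {s t : ℝ} (hs : s ∈ I) (ht : t ∈ I) :
    0 ≤ (q.eval (v s) * p.eval s) * (q.eval (v t) * p.eval t) := by
  have hroot : ∀ x ∈ D, p.eval x = 0 := fun x hx =>
    (rootMultiplicity_pos'.1 ((hp x (hDI hx)).2 hx).pos).2
  by_cases hsD : s ∈ D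
  · simp [hroot s hsD]
  by_cases htD : t ∈ D
  · simp [hroot t htD]
  have hpq := mul_nonneg (eval_mul_prod_sub_nonneg hI hp hs ht)
    (eval_mul_prod_sub_nonneg hJ hq (hvIJ hs) (hvIJ ht))
  refine nonneg_of_mul_nonneg_left ?_ (mul_pos (prod_sub_mul_prod_image_sub_pos hv hDI hs hsD)
    (prod_sub_mul_prod_image_sub_pos hv hDI ht htD))
  convert hpq using 1
  ring

theorem intervalIntegral_ne_zero_of_mul_nonneg {f : ℝ → ℝ} {a b : ℝ} (hab : a < b)
    (hf : IntervalIntegrable f volume a b)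
    (hsign : ∀ s ∈ Ioo a b, ∀ t ∈ Ioo a b, 0 ≤ f s * f t)
    (hzero : {t ∈ Ioo a b | f t = 0}.Finite) : ∫ t in a..b, f t ≠ 0 := by
  obtain ⟨t₀, ht₀, hft₀⟩ : ∃ t₀ ∈ Ioo a b, f t₀ ≠ 0 := by
    obtain ⟨t₀, ht₀, hnot⟩ := ((Ioo_infinite hab).sdiff hzero).nonempty
    exact ⟨t₀, ht₀, fun h => hnot ⟨ht₀, h⟩⟩
  have hnonneg : 0 ≤ᵐ[volume.restrict (Ι a b)] fun t => f t₀ * f t := by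
    rw [EventuallyLE, uIoc_of_le hab.le]
    refine ae_restrict_of_ae_eq_of_ae_restrict Ioo_ae_eq_Ioc ?_
    rw [ae_restrict_iff' measurableSet_Ioo]
    exact Eventually.of_forall fun t ht => hsign t₀ ht₀ t ht
  have hpos : 0 < ∫ t in a..b, f t₀ * f t := by
    rw [integral_pos_iff_support_of_nonneg_ae' hnonneg (hf.const_mul _)]
    refine ⟨hab, ?_⟩
    calc 0 < volume (Ioo a b \ {t ∈ Ioo a b | f t = 0}) := by
          rw [measure_sdiff_null (hzero.measure_zero _)]
          exact (Measure.measure_Ioo_pos _).2 hab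
      _ ≤ volume (Function.support (fun t => f t₀ * f t) ∩ Ioc a b) := measure_mono fun t ht =>
          ⟨mul_ne_zero hft₀ fun h => ht.2 ⟨ht.1, h⟩, Ioo_subset_Ioc_self ht.1⟩
  rw [intervalIntegral.integral_const_mul] at hpos
  exact right_ne_zero_of_mul hpos.ne'

theorem Polynomial.intervalIntegral_ne_zero_of_eqOn_mul_eval_comp_mul_eval {a b : ℝ} (hab : a < b)
    {p q : ℝ[X]} (hp : p ≠ 0) (hq : q ≠ 0) {f w v : ℝ → ℝ} (hf : IntervalIntegrable f volume a b)
    (hfpq : EqOn f (fun t => w t * (q.eval (v t) * p.eval t)) (Ioo a b))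
    (hw : ∀ t ∈ Ioo a b, 0 < w t) (hv : InjOn v (Ioo a b))
    (hsign : ∀ s ∈ Ioo a b, ∀ t ∈ Ioo a b,
      0 ≤ (q.eval (v s) * p.eval s) * (q.eval (v t) * p.eval t)) :
    ∫ t in a..b, f t ≠ 0 := by
  refine intervalIntegral_ne_zero_of_mul_nonneg hab hf (fun s hs t ht => ?_) ?_
  · rw [hfpq hs, hfpq ht]
    calc 0 ≤ (w s * w t) * ((q.eval (v s) * p.eval s) * (q.eval (v t) * p.eval t)) :=
          mul_nonneg (mul_pos (hw s hs) (hw t ht)).le (hsign s hs t ht)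
      _ = _ := by ring
  have hqv : {t ∈ Ioo a b | q.IsRoot (v t)}.Finite :=
    ((q.finite_setOfPred_isRoot hq).subset (image_subset_iff.2 fun t ht => ht.2)).of_finite_image
      (hv.mono fun t ht => ht.1)
  refine ((p.finite_setOfPred_isRoot hp).union hqv).subset fun t ⟨ht, hft⟩ => ?_
  rw [hfpq ht, mul_eq_zero, mul_eq_zero] at hft
  rcases hft with hw0 | hq0 | hp0
  · exact absurd hw0 (hw t ht).ne'
  · exact Or.inr ⟨ht, hq0⟩
  · exact Or.inl hp0

theorem Polynomial.exists_roots_Ioo_of_orthogonal {a b : ℝ} (hab : a < b) {l : ℝ[X]}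
    (hl : l ≠ 0) {w v : ℝ → ℝ} {φ : ℕ → ℝ → ℝ} {E : Finset ℕ}
    (hw : ∀ t ∈ Ioo a b, 0 < w t) (hv : StrictMonoOn v (Ioo a b))
    (hv_pos : MapsTo v (Ioo a b) (Ioi 0))
    (hφ : ∀ e ∈ E, ∀ t ∈ Ioo a b, φ e t = w t * v t ^ e)
    (hint : ∀ e ∈ E, IntervalIntegrable (fun t => φ e t * l.eval t) volume a b)
    (horth : ∀ e ∈ E, ∫ t in a..b, φ e t * l.eval t = 0) :
    ∃ s : Finset ℝ, s.card = E.card ∧ ↑s ⊆ Ioo a b ∧ ∀ x ∈ s, l.eval x = 0 := by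
  set D := {x ∈ l.roots.toFinset | x ∈ Ioo a b ∧ Odd (l.rootMultiplicity x)}
  have hD : ∀ x ∈ Ioo a b, Odd (l.rootMultiplicity x) ↔ x ∈ D := by
    intro x hx
    simp only [D, Finset.mem_filter, Multiset.mem_toFinset, mem_roots hl, and_iff_right hx]
    exact ⟨fun h => ⟨(rootMultiplicity_pos hl).1 h.pos, h⟩, And.right⟩
  have hDI : ↑D ⊆ Ioo a b := fun x hx => (Finset.mem_filter.1 hx).2.1
  suffices hcard : E.card ≤ D.card by
    obtain ⟨s, hsD, hs⟩ := Finset.exists_subset_card_eq hcard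
    exact ⟨s, hs, fun x hx => hDI (hsD hx),
      fun x hx => (mem_roots hl).1 (Multiset.mem_toFinset.1 (Finset.mem_filter.1 (hsD hx)).1)⟩
  by_contra! hlt
  have hvD : (D.image v).card = D.card := Finset.card_image_of_injOn (hv.injOn.mono hDI)
  obtain ⟨E', hE'E, hE'⟩ :=
    Finset.exists_subset_card_eq (show (D.image v).card + 1 ≤ E.card by omega)
  obtain ⟨Q, hQ, hQE', hQD⟩ := exists_support_subset_odd_rootMultiplicity_iff
    (by rw [Finset.coe_image]; exact (hv_pos.mono_left hDI).image_subset) hE'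
  have hint' : ∀ e ∈ E', IntervalIntegrable (fun t => Q.coeff e * (φ e t * l.eval t)) volume a b :=
    fun e he => (hint e (hE'E he)).const_mul _
  have hQv : ∀ y, Q.eval y = ∑ e ∈ E', Q.coeff e * y ^ e := fun y => by
    rw [eval_eq_sum, sum_def]
    exact Finset.sum_subset hQE' fun e _ he => by simp [notMem_support_iff.1 he]
  refine intervalIntegral_ne_zero_of_eqOn_mul_eval_comp_mul_eval hab hl hQ
    (f := fun t => ∑ e ∈ E', Q.coeff e * (φ e t * l.eval t))
    (by simpa [Finset.sum_fn] using IntervalIntegrable.sum E' hint') (fun t ht => ?_) hw hv.injOn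
    (fun s hs t ht => eval_comp_mul_eval_mul_nonneg ordConnected_Ioo ordConnected_Ioi hv hv_pos hDI
      hD hQD hs ht) ?_
  · simp only [hQv, Finset.sum_mul, Finset.mul_sum]
    refine Finset.sum_congr rfl fun e he => ?_
    rw [hφ e (hE'E he) t ht]
    ring
  · rw [intervalIntegral.integral_finsetSum hint']
    exact Finset.sum_eq_zero fun e he => by
      rw [intervalIntegral.integral_const_mul, horth e (hE'E he), mul_zero]

theorem intervalIntegrable_rpow_mul_one_sub_rpow_mul {a b : ℝ} (ha : -1 < a) (hb : -1 < b)
    {f : ℝ → ℝ} (hf : ContinuousOn f (Icc 0 1)) :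
    IntervalIntegrable (fun t => t ^ a * (1 - t) ^ b * f t) volume 0 1 := by
  have hleft : IntervalIntegrable (fun t => t ^ a * (1 - t) ^ b * f t) volume 0 (1 / 2) := by
    have hcont : ContinuousOn (fun t => (1 - t) ^ b * f t) (uIcc 0 (1 / 2)) := by
      rw [uIcc_of_le (by norm_num)]
      refine .mul (.rpow_const (by fun_prop) fun t ht => Or.inl ?_)
        (hf.mono (Icc_subset_Icc_right (by norm_num)))
      linarith [ht.2]
    simpa only [mul_assoc] using (intervalIntegrable_rpow' ha).mul_continuousOn hcont
  have hright : IntervalIntegrable (fun t => t ^ a * (1 - t) ^ b * f t) volume (1 / 2) 1 := by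
    have hcont : ContinuousOn (fun t => t ^ a * f t) (uIcc (1 / 2) 1) := by
      rw [uIcc_of_le (by norm_num)]
      refine .mul (.rpow_const continuousOn_id fun t ht => Or.inl ?_)
        (hf.mono (Icc_subset_Icc_left (by norm_num)))
      exact (lt_of_lt_of_le (by norm_num) ht.1).ne'
    have h := (intervalIntegrable_rpow' hb (a := 1 / 2) (b := 0)).comp_sub_left 1
    rw [show (1 : ℝ) - 1 / 2 = 1 / 2 by norm_num, sub_zero] at h
    simpa only [mul_comm, mul_left_comm, mul_assoc] using h.mul_continuousOn hcont
  exact hleft.trans hright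

theorem betaFn_pos {a b : ℝ} (ha : 0 < a) (hb : 0 < b) : 0 < betaFn a b := by
  have h := intervalIntegrable_rpow_mul_one_sub_rpow_mul (by linarith : -1 < a - 1)
    (by linarith : -1 < b - 1) (continuousOn_const (c := (1 : ℝ)))
  simp only [mul_one] at h
  exact intervalIntegral_pos_of_pos_on h
    (fun t ht => mul_pos (Real.rpow_pos_of_pos ht.1 _) (Real.rpow_pos_of_pos (sub_pos.2 ht.2) _))
    one_pos

theorem strictMonoOn_div_one_sub_rpow {ρ : ℝ} (hρ : 0 < ρ) :
    StrictMonoOn (fun t : ℝ => (t / (1 - t)) ^ ρ) (Ioo 0 1) := by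
  intro s hs t ht hst
  have h : s / (1 - s) < t / (1 - t) := by
    rw [div_lt_div_iff₀ (sub_pos.2 hs.2) (sub_pos.2 ht.2)]
    nlinarith
  exact Real.rpow_lt_rpow (div_pos hs.1 (sub_pos.2 hs.2)).le h hρ

theorem rpow_mul_one_sub_rpow_eq_mul_pow {t : ℝ} (ht : t ∈ Ioo 0 1) (ρ : ℝ) (n j : ℕ) :
    t ^ ((j : ℝ) * ρ - 1) * (1 - t) ^ (((n : ℝ) - j) * ρ - 1) =
      t ^ (-1 : ℝ) * (1 - t) ^ ((n : ℝ) * ρ - 1) * ((t / (1 - t)) ^ ρ) ^ j := by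
  have h0 : 0 < t := ht.1
  have h1 : 0 < 1 - t := sub_pos.2 ht.2
  rw [← Real.rpow_natCast, ← Real.rpow_mul (div_pos h0 h1).le, Real.div_rpow h0.le h1.le,
    show (j : ℝ) * ρ - 1 = -1 + ρ * j by ring, Real.rpow_add h0,
    show ((n : ℝ) - j) * ρ - 1 = (n * ρ - 1) - ρ * j by ring, Real.rpow_sub h1]
  ring

theorem exists_roots_Ioo_of_Ffun_eq_zero {n : ℕ} {ρ : ℝ} (hρ : 0 < ρ) {l : ℝ[X]} (hl : l ≠ 0)
    {E : Finset ℕ} (hE : ∀ j ∈ E, 0 < j ∧ j < n)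
    (hF : ∀ j ∈ E, Ffun n j ρ (fun x => l.eval x) = 0) :
    ∃ s : Finset ℝ, s.card = E.card ∧ ↑s ⊆ Ioo (0 : ℝ) 1 ∧ ∀ x ∈ s, l.eval x = 0 := by
  have hab : ∀ j ∈ E, 0 < (j : ℝ) * ρ ∧ 0 < ((n : ℝ) - j) * ρ := fun j hj =>
    ⟨mul_pos (Nat.cast_pos.2 (hE j hj).1) hρ, mul_pos (sub_pos.2 (Nat.cast_lt.2 (hE j hj).2)) hρ⟩
  refine exists_roots_Ioo_of_orthogonal zero_lt_one hl
    (w := fun t => t ^ (-1 : ℝ) * (1 - t) ^ ((n : ℝ) * ρ - 1)) (v := fun t => (t / (1 - t)) ^ ρ)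
    (φ := fun j t => t ^ ((j : ℝ) * ρ - 1) * (1 - t) ^ (((n : ℝ) - j) * ρ - 1))
    (fun t ht => mul_pos (Real.rpow_pos_of_pos ht.1 _) (Real.rpow_pos_of_pos (sub_pos.2 ht.2) _))
    (strictMonoOn_div_one_sub_rpow hρ)
    (fun t ht => Real.rpow_pos_of_pos (div_pos ht.1 (sub_pos.2 ht.2)) ρ)
    (fun j _ t ht => rpow_mul_one_sub_rpow_eq_mul_pow ht ρ n j)
    (fun j hj => intervalIntegrable_rpow_mul_one_sub_rpow_mul (by linarith [(hab j hj).1])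
      (by linarith [(hab j hj).2]) l.continuousOn) fun j hj => ?_
  have h := hF j hj
  rw [Ffun, if_neg (hE j hj).1.ne', if_neg (hE j hj).2.ne] at h
  exact (mul_eq_zero.1 h).resolve_left (inv_ne_zero (betaFn_pos (hab j hj).1 (hab j hj).2).ne')

theorem Polynomial.exists_roots_Icc_of_roots_Ioo {l : ℝ[X]} {s : Finset ℝ}
    (hs : ↑s ⊆ Ioo (0 : ℝ) 1) (hroot : ∀ x ∈ s, l.eval x = 0) :
    ∃ s' : Finset ℝ, s'.card = s.card + (if l.eval 0 = 0 then 1 else 0) +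
      (if l.eval 1 = 0 then 1 else 0) ∧ ↑s' ⊆ Icc (0 : ℝ) 1 ∧ ∀ x ∈ s', l.eval x = 0 := by
  set e := {x ∈ ({0, 1} : Finset ℝ) | l.eval x = 0}
  have he : ∀ x ∈ e, x = 0 ∨ x = 1 := fun x hx => by simpa using (Finset.mem_filter.1 hx).1
  refine ⟨s ∪ e, ?_, ?_, ?_⟩
  · rw [Finset.card_union_of_disjoint ?_, add_assoc]
    · congr 1
      by_cases h0 : l.eval 0 = 0 <;> by_cases h1 : l.eval 1 = 0 <;>
        simp [e, Finset.filter_insert, Finset.filter_singleton, h0, h1]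
    refine Finset.disjoint_left.2 fun x hxs hxe => ?_
    have hx := hs hxs
    rcases he x hxe with rfl | rfl <;> simp at hx
  · rw [Finset.coe_union]
    refine union_subset (hs.trans Ioo_subset_Icc_self) fun x hx => ?_
    rcases he x hx with rfl | rfl <;> simp
  · intro x hx
    exact (Finset.mem_union.1 hx).elim (hroot x) fun hxe => (Finset.mem_filter.1 hxe).2

theorem fundamental_poly_roots_general (n : ℕ) (hn : 1 ≤ n) (ρ : ℝ) (hρ : 0 < ρ)
    (k : ℕ) (hk : k ≤ n)
    (l : Polynomial ℝ)
    (hl : ∀ j ≤ n, Ffun n j ρ (fun x => l.eval x) = if j = k then 1 else 0) :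
    ∃ s : Finset ℝ, s.card = n ∧ ↑s ⊆ Set.Icc (0 : ℝ) 1 ∧
      ∀ x ∈ s, l.eval x = 0 := by
  have hl0 : l ≠ 0 := by
    rintro rfl
    simpa [Ffun] using hl k hk
  have h0 : l.eval 0 = if 0 = k then 1 else 0 := by simpa [Ffun] using hl 0 (Nat.zero_le n)
  have h1 : l.eval 1 = if n = k then 1 else 0 := by
    simpa [Ffun, Nat.one_le_iff_ne_zero.1 hn] using hl n le_rfl
  have hE : ∀ j ∈ (Finset.Ioo 0 n).erase k, 0 < j ∧ j < n := fun j hj =>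
    Finset.mem_Ioo.1 (Finset.mem_of_mem_erase hj)
  obtain ⟨s, hs_card, hs_sub, hs_root⟩ := exists_roots_Ioo_of_Ffun_eq_zero hρ hl0 hE
    fun j hj => by rw [hl j (hE j hj).2.le, if_neg (Finset.ne_of_mem_erase hj)]
  obtain ⟨s', hs'_card, hs'_sub, hs'_root⟩ := exists_roots_Icc_of_roots_Ioo hs_sub hs_root
  refine ⟨s', ?_, hs'_sub, hs'_root⟩
  rw [hs'_card, hs_card, h0, h1]
  grind [Finset.card_erase_eq_ite, Nat.card_Ioo]

/-- For `n ≥ 1`, `ρ > 0` and `0 ≤ k ≤ n`, the fundamental polynomial `l_{n,k}^ρ`,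
i.e. the unique polynomial in `Π_n` with `F_{n,j}^ρ(l_{n,k}^ρ) = δ_{jk}`,
has `n` distinct roots in `[0,1]`. -/
theorem fundamental_poly_roots (n : ℕ) (hn : 1 ≤ n) (ρ : ℝ) (hρ : 0 < ρ)
    (k : ℕ) (hk : k ≤ n)
    (l : Polynomial ℝ) (hldeg : l.natDegree ≤ n)
    (hl : ∀ j ≤ n, Ffun n j ρ (fun x => l.eval x) = if j = k then 1 else 0) :
    ∃ s : Finset ℝ, s.card = n ∧ ↑s ⊆ Set.Icc (0 : ℝ) 1 ∧
      ∀ x ∈ s, l.eval x = 0 :=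
  fundamental_poly_roots_general n hn ρ hρ k hk l hl
end

section
/- For every integer n ≥ 1, every ρ > 0, and every continuous function f : [0,1] → ℝ, one has U_n^ρ f = B_n(𝔅_{nρ} f), where B_n is the classical Bernstein operator B_n g(x) = ∑_{k=0}^n g(k/n) p_{n,k}(x) and 𝔅_{nρ} is the Lupaş–Mühlbach Beta operator defined by 𝔅_r f(0) = f(0), 𝔅_r f(1) = f(1), and 𝔅_r f(x) = (1/B(rx, r−rx)) ∫₀¹ t^{rx−1}(1−t)^{r−rx−1} f(t) dt for 0 < x < 1. -/
open MeasureTheory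

/-- The Lupaş–Mühlbach Beta operator `𝔅_r`. -/
noncomputable def lupasBeta (r : ℝ) (f : ℝ → ℝ) (x : ℝ) : ℝ :=
  if x = 0 then f 0
  else if x = 1 then f 1
  else (betaFn (r * x) (r - r * x))⁻¹ *
    ∫ t in (0:ℝ)..1, t ^ (r * x - 1) * (1 - t) ^ (r - r * x - 1) * f t

theorem Ffun_eq_lupasBeta {n k : ℕ} (hk : k ≤ n) (ρ : ℝ) (f : ℝ → ℝ) :
    Ffun n k ρ f = lupasBeta ((n : ℝ) * ρ) f ((k : ℝ) / n) := by
  rcases Nat.eq_zero_or_pos k with rfl | hk0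
  · simp [Ffun, lupasBeta]
  rcases hk.eq_or_lt with rfl | hkn
  · have hk_ne : (k : ℝ) ≠ 0 := by positivity
    simp [Ffun, lupasBeta, hk0.ne', hk_ne]
  have hn : (n : ℝ) ≠ 0 := Nat.cast_ne_zero.mpr (by omega)
  have hx0 : (k : ℝ) / n ≠ 0 := div_ne_zero (by positivity) hn
  have hx1 : (k : ℝ) / n ≠ 1 := by
    rw [Ne, div_eq_one_iff_eq hn]
    exact_mod_cast hkn.ne
  have hshape : (n : ℝ) * ρ * (k / n) = k * ρ := by field_simp
  simp only [Ffun, lupasBeta, hk0.ne', hkn.ne, hx0, hx1, if_false, hshape, sub_mul]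

theorem Uop_eq_bernstein_comp_beta_general (n : ℕ) (ρ : ℝ)
    (f : ℝ → ℝ) :
    ∀ x ∈ Set.Icc (0 : ℝ) 1,
      Uop n ρ f x =
        ∑ k ∈ Finset.range (n + 1),
          lupasBeta ((n : ℝ) * ρ) f ((k : ℝ) / (n : ℝ)) * bern n k x := fun x _ =>
  Finset.sum_congr rfl fun k hk => by
    rw [Ffun_eq_lupasBeta (Nat.lt_succ_iff.mp (Finset.mem_range.mp hk))]

/-- `U_n^ρ = B_n ∘ 𝔅_{nρ}`: for every `n ≥ 1`, `ρ > 0` and continuous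
`f : [0,1] → ℝ`, one has `U_n^ρ f = B_n (𝔅_{nρ} f)`, where
`B_n g(x) = ∑_{k=0}^n g(k/n) p_{n,k}(x)` is the Bernstein operator. -/
theorem Uop_eq_bernstein_comp_beta (n : ℕ) (hn : 1 ≤ n) (ρ : ℝ) (hρ : 0 < ρ)
    (f : ℝ → ℝ) (hf : ContinuousOn f (Set.Icc 0 1)) :
    ∀ x ∈ Set.Icc (0 : ℝ) 1,
      Uop n ρ f x =
        ∑ k ∈ Finset.range (n + 1),
          lupasBeta ((n : ℝ) * ρ) f ((k : ℝ) / (n : ℝ)) * bern n k x :=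
  Uop_eq_bernstein_comp_beta_general n ρ f
end
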